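/- arXiv:0803.1541 — 2 statements merged into one kernel-verified Lean document; each statement's English description precedes it below -/
import Mathlib

section
/- Let (Y, d_Y) be a compact geodesic metric space, M > 0, and d_ℓ the induced length metric on X_M = Y × (0, M] associated to the Balogh–Schramm distance ρ. Then for all p, q ∈ Y and 0 < s ≤ M: d_ℓ((p,s),(q,s)) ≤ 2·d_Y(p,q)/s. Moreover, if in addition s ≤ d_Y(p,q) ≤ M, then d_ℓ((p,s),(q,s)) ≤ 2·log(d_Y(p,q)/s) + 2. -/
open Set

/-- The Balogh–Schramm distance on `Y × (0, ∞)`: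
`ρ((p,s),(q,t)) = 2·log((d_Y(p,q) + max(s,t))/√(s·t))`. -/
noncomputable def BS {Y : Type*} [MetricSpace Y] (x y : Y × ℝ) : ℝ :=
  2 * Real.log ((dist x.1 y.1 + max x.2 y.2) / Real.sqrt (x.2 * y.2))

/-- Length of the map `γ` over the set `S` with respect to the distance
function `d`: the supremum over finite monotone partitions in `S` of the sums
of consecutive distances (as in Mathlib's `eVariationOn`). -/
noncomputable def lengthOn {X : Type*} (d : X → X → ℝ) (γ : ℝ → X) (S : Set ℝ) : ENNReal :=
  ⨆ p : ℕ × { u : ℕ → ℝ // Monotone u ∧ ∀ i, u i ∈ S },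
    ∑ i ∈ Finset.range p.1, ENNReal.ofReal (d (γ (p.2.1 i)) (γ (p.2.1 (i + 1))))

/-- Membership in `X_M = Y × (0, M]`. -/
def inXM {Y : Type*} (M : ℝ) (x : Y × ℝ) : Prop := 0 < x.2 ∧ x.2 ≤ M

/-- The induced length metric on `X_M = Y × (0, M]`: the infimum of
Balogh–Schramm lengths of continuous paths joining `x` and `y` inside `X_M`. -/
noncomputable def dLen {Y : Type*} [MetricSpace Y] (M : ℝ) (x y : Y × ℝ) : ℝ :=
  (sInf {L : ENNReal | ∃ (a b : ℝ) (γ : ℝ → Y × ℝ), a ≤ b ∧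
      ContinuousOn γ (Icc a b) ∧ γ a = x ∧ γ b = y ∧
      (∀ t ∈ Icc a b, inXM M (γ t)) ∧
      lengthOn (BS (Y := Y)) γ (Icc a b) = L}).toReal

/-- A metric space is geodesic: any two points are joined by an isometric
embedding of `[0, dist p q]`. -/
def GeodesicSpace (Y : Type*) [MetricSpace Y] : Prop :=
  ∀ p q : Y, ∃ α : ℝ → Y, α 0 = p ∧ α (dist p q) = q ∧
    ∀ s ∈ Icc (0:ℝ) (dist p q), ∀ t ∈ Icc (0:ℝ) (dist p q), dist (α s) (α t) = |s - t|

/-- The Gromov product `(x,y)_ω` with respect to the length metric `dLen M`. -/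
noncomputable def gromovProd {Y : Type*} [MetricSpace Y] (M : ℝ) (ω x y : Y × ℝ) : ℝ :=
  (dLen M x ω + dLen M y ω - dLen M x y) / 2

/-!
The Balogh–Schramm distance is a pseudometric on `Y × (0, ∞)`: taking logarithms, its triangle
inequality becomes a product inequality for the quotients `(d + max s t) / √(s t)`. Hence `d_ℓ` is
bounded by the parameter length of any path that is `1`-Lipschitz for `ρ`. Two such paths give the
estimates: the horizontal path at height `s` along a geodesic from `p` to `q`, run at speed `s / 2`,
and the arch which rises from height `s` to height `d_Y(p,q)` with logarithmic speed `1`, crosses at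
speed `d_Y(p,q) / 2` and descends again.
-/

open Real

section BaloghSchramm

variable {Y : Type*} [MetricSpace Y]

lemma max_mul_le_max_mul_max {s t u : ℝ} (hs : 0 ≤ s) (ht : 0 ≤ t) (hu : 0 ≤ u) :
    max s u * t ≤ max s t * max t u := by
  rcases le_total s u with h | h
  · rw [max_eq_right h, mul_comm]
    exact mul_le_mul (le_max_right s t) (le_max_right t u) hu (ht.trans (le_max_right s t))
  · rw [max_eq_left h]
    exact mul_le_mul (le_max_left s t) (le_max_left t u) ht (hs.trans (le_max_left s t))

lemma BS_self {x : Y × ℝ} (hx : 0 < x.2) : BS x x = 0 := by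
  simp [BS, Real.sqrt_mul_self hx.le, div_self hx.ne']

lemma BS_comm (x y : Y × ℝ) : BS x y = BS y x := by
  simp [BS, dist_comm, max_comm, mul_comm]

lemma BS_triangle {x y z : Y × ℝ} (hx : 0 < x.2) (hy : 0 < y.2) (hz : 0 < z.2) :
    BS x z ≤ BS x y + BS y z := by
  obtain ⟨a, s⟩ := x
  obtain ⟨b, t⟩ := y
  obtain ⟨c, u⟩ := z
  dsimp only at hx hy hz
  have hst := Real.sqrt_pos.2 (mul_pos hx hy)
  have htu := Real.sqrt_pos.2 (mul_pos hy hz)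
  have hsu := Real.sqrt_pos.2 (mul_pos hx hz)
  have hsqrt : √(s * t) * √(t * u) = √(s * u) * t := by
    rw [← Real.sqrt_mul (mul_pos hx hy).le, show s * t * (t * u) = s * u * (t * t) by ring,
      Real.sqrt_mul (mul_pos hx hz).le, Real.sqrt_mul_self hy.le]
  have hnum : (dist a c + max s u) * t ≤ (dist a b + max s t) * (dist b c + max t u) := by
    nlinarith [dist_triangle a b c, max_mul_le_max_mul_max hx.le hy.le hz.le, le_max_left t u,
      le_max_right s t, dist_nonneg (x := a) (y := b), dist_nonneg (x := b) (y := c)]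
  have hquot : (dist a c + max s u) / √(s * u) ≤
      (dist a b + max s t) / √(s * t) * ((dist b c + max t u) / √(t * u)) := by
    rw [div_mul_div_comm, hsqrt, div_le_div_iff₀ hsu (mul_pos hsu hy)]
    nlinarith
  have hpos : ∀ {d m r : ℝ}, 0 ≤ d → 0 < m → 0 < r → 0 < (d + m) / r :=
    fun hd hm hr => div_pos (add_pos_of_nonneg_of_pos hd hm) hr
  have := Real.log_le_log (hpos dist_nonneg (lt_max_of_lt_left hx) hsu) hquot
  rw [Real.log_mul (hpos dist_nonneg (lt_max_of_lt_left hx) hst).ne'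
    (hpos dist_nonneg (lt_max_of_lt_left hy) htu).ne'] at this
  simp only [BS]
  linarith

lemma BS_same_base (x : Y) {u v : ℝ} (hu : 0 < u) (hv : 0 < v) :
    BS (x, u) (x, v) = |log u - log v| := by
  simp only [BS, dist_self, zero_add]
  rw [Real.log_div (lt_max_of_lt_left hu).ne' (Real.sqrt_pos.2 (mul_pos hu hv)).ne',
    Real.log_sqrt (mul_pos hu hv).le, Real.log_mul hu.ne' hv.ne']
  rcases le_total u v with h | h
  · rw [max_eq_right h, abs_of_nonpos (sub_nonpos.2 (Real.log_le_log hu h))]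
    ring
  · rw [max_eq_left h, abs_of_nonneg (sub_nonneg.2 (Real.log_le_log hv h))]
    ring

lemma BS_same_height_le (x y : Y) {c : ℝ} (hc : 0 < c) :
    BS (x, c) (y, c) ≤ 2 * dist x y / c := by
  simp only [BS, max_self, Real.sqrt_mul_self hc.le]
  have hd : 0 ≤ dist x y := dist_nonneg
  have := Real.log_le_sub_one_of_pos (div_pos (add_pos_of_nonneg_of_pos hd hc) hc)
  rw [add_div, div_self hc.ne', add_sub_cancel_right] at this
  rw [add_div, div_self hc.ne', mul_div_assoc]
  linarith

def BSSpace (Y : Type*) := {x : Y × ℝ // 0 < x.2}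

noncomputable instance : PseudoMetricSpace (BSSpace Y) where
  dist x y := BS x.1 y.1
  dist_self x := BS_self x.2
  dist_comm x y := BS_comm x.1 y.1
  dist_triangle x y z := BS_triangle x.2 y.2 z.2

lemma BSSpace.dist_def (x y : BSSpace Y) : dist x y = BS x.1 y.1 := rfl

lemma lengthOn_BS_eq_eVariationOn (γ : ℝ → BSSpace Y) (S : Set ℝ) :
    lengthOn BS (fun t => (γ t).1) S = eVariationOn γ S :=
  iSup_congr fun _ => Finset.sum_congr rfl fun _ _ => by
    rw [edist_dist, BSSpace.dist_def, BS_comm]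

lemma eVariationOn_Icc_le_of_lipschitzOnWith {E : Type*} [PseudoEMetricSpace E] {f : ℝ → E}
    {K : NNReal} {a b : ℝ} (hf : LipschitzOnWith K f (Icc a b)) :
    eVariationOn f (Icc a b) ≤ K * ENNReal.ofReal (b - a) := by
  simpa using hf.comp_eVariationOn_le (g := id) (mapsTo_id _)

lemma LipschitzOnWith.Icc_union_Icc {E : Type*} [PseudoMetricSpace E] {f : ℝ → E} {K : NNReal}
    {a b c : ℝ} (hab : LipschitzOnWith K f (Icc a b)) (hbc : LipschitzOnWith K f (Icc b c)) :
    LipschitzOnWith K f (Icc a c) := by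
  rw [lipschitzOnWith_iff_dist_le_mul] at hab hbc ⊢
  have key : ∀ x ∈ Icc a c, ∀ y ∈ Icc a c, x ≤ y → dist (f x) (f y) ≤ K * dist x y := by
    intro x hx y hy hxy
    rcases le_total y b with hyb | hby
    · exact hab x ⟨hx.1, hxy.trans hyb⟩ y ⟨hx.1.trans hxy, hyb⟩
    rcases le_total x b with hxb | hbx
    · calc dist (f x) (f y) ≤ dist (f x) (f b) + dist (f b) (f y) := dist_triangle _ _ _
        _ ≤ K * dist x b + K * dist b y :=
          add_le_add (hab x ⟨hx.1, hxb⟩ b ⟨hx.1.trans hxb, le_rfl⟩)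
            (hbc b ⟨le_rfl, hby.trans hy.2⟩ y ⟨hby, hy.2⟩)
        _ = K * dist x y := by
          rw [Real.dist_eq, Real.dist_eq, Real.dist_eq, abs_of_nonpos (by linarith),
            abs_of_nonpos (by linarith), abs_of_nonpos (by linarith)]
          ring
    · exact hbc x ⟨hbx, hx.2⟩ y ⟨hbx.trans hxy, hy.2⟩
  intro x hx y hy
  rcases le_total x y with h | h
  · exact key x hx y hy h
  · rw [dist_comm, dist_comm x]
    exact key y hy x hx h

lemma dLen_le_of_lipschitzOnWith {M a b : ℝ} {γ : ℝ → BSSpace Y} (hab : a ≤ b)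
    (hcont : ContinuousOn (fun t => (γ t).1) (Icc a b)) (hM : ∀ t ∈ Icc a b, (γ t).1.2 ≤ M)
    (hγ : LipschitzOnWith 1 γ (Icc a b)) : dLen M (γ a).1 (γ b).1 ≤ b - a := by
  unfold dLen
  refine ENNReal.toReal_le_of_le_ofReal (sub_nonneg.2 hab)
    ((sInf_le (a := lengthOn BS (fun t => (γ t).1) (Icc a b)) ?_).trans ?_)
  · exact ⟨a, b, fun t => (γ t).1, hab, hcont, rfl, rfl, fun t ht => ⟨(γ t).2, hM t ht⟩, rfl⟩
  rw [lengthOn_BS_eq_eVariationOn]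
  simpa using eVariationOn_Icc_le_of_lipschitzOnWith hγ

lemma lipschitzOnWith_of_vertical {γ : ℝ → BSSpace Y} {S : Set ℝ} (x : Y) {c : ℝ} (hc : 0 < c)
    {σ : ℝ → ℝ} (hγ : ∀ t ∈ S, (γ t).1 = (x, c * exp (σ t)))
    (hσ : ∀ t ∈ S, ∀ t' ∈ S, |σ t - σ t'| ≤ |t - t'|) : LipschitzOnWith 1 γ S := by
  refine LipschitzOnWith.of_dist_le_mul fun t ht t' ht' => ?_
  have hlog : ∀ r, log (c * exp r) = log c + r := fun r => by
    rw [Real.log_mul hc.ne' (exp_pos r).ne', log_exp]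
  rw [BSSpace.dist_def, hγ t ht, hγ t' ht', BS_same_base x (by positivity) (by positivity),
    hlog, hlog, add_sub_add_left_eq_sub, NNReal.coe_one, one_mul, Real.dist_eq]
  exact hσ t ht t' ht'

lemma lipschitzOnWith_of_horizontal {γ : ℝ → BSSpace Y} {S : Set ℝ} {c : ℝ} (hc : 0 < c)
    {β : ℝ → Y} (hγ : ∀ t ∈ S, (γ t).1 = (β t, c))
    (hβ : ∀ t ∈ S, ∀ t' ∈ S, dist (β t) (β t') ≤ c / 2 * |t - t'|) :
    LipschitzOnWith 1 γ S := by
  refine LipschitzOnWith.of_dist_le_mul fun t ht t' ht' => ?_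
  rw [BSSpace.dist_def, hγ t ht, hγ t' ht', NNReal.coe_one, one_mul, Real.dist_eq]
  calc BS (β t, c) (β t', c) ≤ 2 * dist (β t) (β t') / c := BS_same_height_le _ _ hc
    _ ≤ 2 * (c / 2 * |t - t'|) / c := by gcongr; exact hβ t ht t' ht'
    _ = |t - t'| := by field_simp

lemma continuousOn_of_dist_eq_abs_sub {α : ℝ → Y} {S : Set ℝ}
    (hα : ∀ u ∈ S, ∀ v ∈ S, dist (α u) (α v) = |u - v|) : ContinuousOn α S :=
  (LipschitzOnWith.of_dist_le_mul fun u hu v hv => by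
    rw [hα u hu v hv, NNReal.coe_one, one_mul, Real.dist_eq]).continuousOn

theorem dLen_le_two_mul_dist_div (hgeo : GeodesicSpace Y) {M : ℝ} (p q : Y) {s : ℝ} (hs : 0 < s)
    (hsM : s ≤ M) : dLen M (p, s) (q, s) ≤ 2 * dist p q / s := by
  obtain ⟨α, hα0, hαD, hα⟩ := hgeo p q
  set D := dist p q
  have hscale : MapsTo (fun t => s * t / 2) (Icc 0 (2 * D / s)) (Icc 0 D) := fun t ⟨ht₀, htD⟩ => by
    rw [le_div_iff₀ hs] at htD
    exact ⟨by positivity, by linarith⟩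
  let γ : ℝ → BSSpace Y := fun t => ⟨(α (s * t / 2), s), hs⟩
  have hγ : LipschitzOnWith 1 γ (Icc 0 (2 * D / s)) :=
    lipschitzOnWith_of_horizontal hs (fun t _ => rfl) fun t ht t' ht' => by
      rw [hα _ (hscale ht) _ (hscale ht'), show s * t / 2 - s * t' / 2 = s / 2 * (t - t') by ring,
        abs_mul, abs_of_pos (half_pos hs)]
  have hcont : ContinuousOn (fun t => (γ t).1) (Icc 0 (2 * D / s)) :=
    ((continuousOn_of_dist_eq_abs_sub hα).comp (by fun_prop) hscale).prodMk continuousOn_const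
  have hend : s * (2 * D / s) / 2 = D := by field_simp
  simpa [γ, hα0, hend, hαD] using
    dLen_le_of_lipschitzOnWith (by positivity) hcont (fun _ _ => hsM) hγ

end BaloghSchramm

section archPath

variable {Y : Type*} (α : ℝ → Y) {s : ℝ} (hs : 0 < s) {L t : ℝ}

noncomputable def archPath (L t : ℝ) : BSSpace Y :=
  ⟨(α (s * exp L * min (max (t - L) 0) 2 / 2), s * exp (min t L - max (t - (L + 2)) 0)),
    by positivity⟩

lemma archPath_of_mem_rise (ht : t ∈ Icc 0 L) : (archPath α hs L t).1 = (α 0, s * exp t) := by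
  simp only [archPath]
  rw [max_eq_right (by linarith [ht.2] : t - L ≤ 0), min_eq_left zero_le_two, mul_zero,
    zero_div, min_eq_left ht.2, max_eq_right (by linarith [ht.2]), sub_zero]

lemma archPath_of_mem_cross (ht : t ∈ Icc L (L + 2)) :
    (archPath α hs L t).1 = (α (s * exp L * (t - L) / 2), s * exp L) := by
  simp only [archPath]
  rw [max_eq_left (by linarith [ht.1] : 0 ≤ t - L),
    min_eq_left (by linarith [ht.2] : t - L ≤ 2), min_eq_right ht.1,
    max_eq_right (by linarith [ht.2] : t - (L + 2) ≤ 0), sub_zero]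

lemma archPath_of_mem_descend (ht : t ∈ Icc (L + 2) (2 * L + 2)) :
    (archPath α hs L t).1 = (α (s * exp L), s * exp (2 * L + 2 - t)) := by
  simp only [archPath]
  rw [max_eq_left (by linarith [ht.1] : 0 ≤ t - L),
    min_eq_right (by linarith [ht.1] : 2 ≤ t - L), mul_div_cancel_right₀ _ two_ne_zero,
    min_eq_right (by linarith [ht.1] : L ≤ t), max_eq_left (by linarith [ht.1] : 0 ≤ t - (L + 2))]
  ring_nf

lemma archPath_height_le : (archPath α hs L t).1.2 ≤ s * exp L := by
  have : min t L - max (t - (L + 2)) 0 ≤ L := by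
    linarith [min_le_right t L, le_max_right (t - (L + 2)) 0]
  simp only [archPath]
  gcongr

variable [MetricSpace Y]

lemma continuous_archPath (hα : ContinuousOn α (Icc 0 (s * exp L))) :
    Continuous fun t => (archPath α hs L t).1 := by
  refine (hα.comp_continuous (by fun_prop) fun t => ?_).prodMk (by fun_prop)
  have h₀ : 0 ≤ min (max (t - L) 0) 2 := le_min (le_max_right _ _) zero_le_two
  have h₂ : min (max (t - L) 0) 2 ≤ 2 := min_le_right _ _
  have hc : 0 ≤ s * exp L := by positivity
  constructor <;> nlinarith [mul_nonneg hc h₀, mul_le_mul_of_nonneg_left h₂ hc]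

lemma lipschitzOnWith_archPath
    (hα : ∀ u ∈ Icc 0 (s * exp L), ∀ v ∈ Icc 0 (s * exp L), dist (α u) (α v) = |u - v|) :
    LipschitzOnWith 1 (archPath α hs L) (Icc 0 (2 * L + 2)) := by
  have hc : 0 < s * exp L := by positivity
  have hrise : LipschitzOnWith 1 (archPath α hs L) (Icc 0 L) :=
    lipschitzOnWith_of_vertical (α 0) hs (σ := id) (fun _ ht => archPath_of_mem_rise α hs ht)
      fun _ _ _ _ => le_rfl
  have hdescend : LipschitzOnWith 1 (archPath α hs L) (Icc (L + 2) (2 * L + 2)) :=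
    lipschitzOnWith_of_vertical (α (s * exp L)) hs (σ := fun t => 2 * L + 2 - t)
      (fun _ ht => archPath_of_mem_descend α hs ht) fun t _ t' _ => by
        rw [show 2 * L + 2 - t - (2 * L + 2 - t') = t' - t by ring, abs_sub_comm]
  have hscale : MapsTo (fun t => s * exp L * (t - L) / 2) (Icc L (L + 2)) (Icc 0 (s * exp L)) :=
    fun t ⟨htL, htL₂⟩ => ⟨by nlinarith, by nlinarith⟩
  have hcross : LipschitzOnWith 1 (archPath α hs L) (Icc L (L + 2)) :=
    lipschitzOnWith_of_horizontal hc (fun _ ht => archPath_of_mem_cross α hs ht)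
      fun t ht t' ht' => by
        rw [hα _ (hscale ht) _ (hscale ht'), show s * exp L * (t - L) / 2 - s * exp L * (t' - L) / 2
          = s * exp L / 2 * (t - t') by ring, abs_mul, abs_of_pos (half_pos hc)]
  exact (hrise.Icc_union_Icc hcross).Icc_union_Icc hdescend

end archPath

theorem dLen_le_two_mul_log_add_two {Y : Type*} [MetricSpace Y] (hgeo : GeodesicSpace Y) {M : ℝ}
    (p q : Y) {s : ℝ} (hs : 0 < s) (hsD : s ≤ dist p q) (hDM : dist p q ≤ M) :
    dLen M (p, s) (q, s) ≤ 2 * log (dist p q / s) + 2 := by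
  obtain ⟨α, hα0, hαD, hα⟩ := hgeo p q
  set L := log (dist p q / s)
  have hL : 0 ≤ L := log_nonneg ((one_le_div hs).2 hsD)
  have htop : s * exp L = dist p q := by
    rw [exp_log (div_pos (hs.trans_le hsD) hs)]
    field_simp
  rw [← htop] at hα hαD hDM
  have := dLen_le_of_lipschitzOnWith (M := M) (by linarith : (0 : ℝ) ≤ 2 * L + 2)
    (continuous_archPath α hs (continuousOn_of_dist_eq_abs_sub hα)).continuousOn
    (fun _ _ => (archPath_height_le α hs).trans hDM) (lipschitzOnWith_archPath α hs hα)
  rw [archPath_of_mem_rise α hs ⟨le_rfl, hL⟩,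
    archPath_of_mem_descend α hs ⟨by linarith, le_rfl⟩] at this
  simpa [hα0, hαD] using this

theorem stmt16_general {Y : Type*} [MetricSpace Y] (hgeo : GeodesicSpace Y)
    {M : ℝ} (p q : Y) {s : ℝ} (hs : 0 < s) (hsM : s ≤ M) :
    dLen M (p, s) (q, s) ≤ 2 * dist p q / s ∧
      (s ≤ dist p q → dist p q ≤ M →
        dLen M (p, s) (q, s) ≤ 2 * Real.log (dist p q / s) + 2) :=
  ⟨dLen_le_two_mul_dist_div hgeo p q hs hsM, dLen_le_two_mul_log_add_two hgeo p q hs⟩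

/-- horizontal distance estimates for the induced length metric:
`dLen M (p,s) (q,s) ≤ 2·d_Y(p,q)/s`, and if moreover `s ≤ d_Y(p,q) ≤ M` then
`dLen M (p,s) (q,s) ≤ 2·log(d_Y(p,q)/s) + 2`. -/
theorem stmt16 {Y : Type*} [MetricSpace Y] [CompactSpace Y] (hgeo : GeodesicSpace Y)
    {M : ℝ} (hM : 0 < M) (p q : Y) {s : ℝ} (hs : 0 < s) (hsM : s ≤ M) :
    dLen M (p, s) (q, s) ≤ 2 * dist p q / s ∧
      (s ≤ dist p q → dist p q ≤ M →
        dLen M (p, s) (q, s) ≤ 2 * Real.log (dist p q / s) + 2) :=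
  stmt16_general hgeo p q hs hsM
end

section
/- Let (X, d) be a compact metric space which is a length space: for all x, y ∈ X, d(x,y) equals the infimum of the lengths (eVariationOn with respect to d) of continuous paths joining x and y in X. Then (X, d) is geodesic: for every x, y ∈ X there is an isometric embedding γ : [0, d(x,y)] → X with γ(0) = x and γ(d(x,y)) = y. -/
/-!
In a length space a path from `x` to `y` of length `< d(x, y) + 2ε` contains, by the intermediate
value theorem, a point equidistant from `x` and `y`, which is then an `ε`-approximate midpoint;
minimising `max (d(x, m), d(m, y))` over the compact space gives an exact midpoint. Iterating
midpoints yields for each `n` a chain of `2ⁿ + 1` points with steps `≤ d(x, y) / 2ⁿ`; since the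
endpoints are `d(x, y)` apart, the chain is exactly equally spaced, and the associated step function
is a `2 d(x, y) / 2ⁿ`-approximate geodesic. The approximate geodesics form a decreasing family of
closed subsets of `ℝ → X`, which is compact in the product topology by Tychonoff's theorem, so
their intersection contains a geodesic.
-/

open Set

open scoped ENNReal

theorem ContinuousOn.exists_dist_eq_dist {α X : Type*} [ConditionallyCompleteLinearOrder α]
    [TopologicalSpace α] [OrderTopology α] [DenselyOrdered α] [PseudoMetricSpace X]
    {γ : α → X} {a b : α} (hab : a ≤ b) (hγ : ContinuousOn γ (Icc a b)) :
    ∃ t ∈ Icc a b, dist (γ a) (γ t) = dist (γ t) (γ b) := by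
  have hf : ContinuousOn (fun t => dist (γ a) (γ t) - dist (γ t) (γ b)) (Icc a b) := by
    fun_prop
  have h0 : (0 : ℝ) ∈ Icc (dist (γ a) (γ a) - dist (γ a) (γ b))
      (dist (γ a) (γ b) - dist (γ b) (γ b)) := by
    simp
  obtain ⟨t, ht, hft⟩ := intermediate_value_Icc hab hf h0
  exact ⟨t, ht, sub_eq_zero.mp hft⟩

theorem edist_add_edist_le_eVariationOn {α E : Type*} [LinearOrder α] [PseudoEMetricSpace E]
    (f : α → E) {a t b : α} (ht : t ∈ Icc a b) :
    edist (f a) (f t) + edist (f t) (f b) ≤ eVariationOn f (Icc a b) := by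
  have hsplit := eVariationOn.Icc_add_Icc f ht.1 ht.2 (mem_univ t)
  simp only [univ_inter] at hsplit
  rw [← hsplit]
  gcongr
  · exact eVariationOn.edist_le f ⟨le_rfl, ht.1⟩ ⟨ht.1, le_rfl⟩
  · exact eVariationOn.edist_le f ⟨le_rfl, ht.2⟩ ⟨ht.2, le_rfl⟩

theorem dist_eq_mul_of_dist_succ_le {X : Type*} [PseudoMetricSpace X] {p : ℕ → X} {N : ℕ}
    {δ : ℝ} (hstep : ∀ k < N, dist (p k) (p (k + 1)) ≤ δ) (hend : N * δ ≤ dist (p 0) (p N))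
    {i j : ℕ} (hij : i ≤ j) (hj : j ≤ N) : dist (p i) (p j) = (j - i) * δ := by
  have upper : ∀ {i j : ℕ}, i ≤ j → j ≤ N → dist (p i) (p j) ≤ (j - i) * δ := by
    intro i j hij hj
    calc dist (p i) (p j) ≤ ∑ _k ∈ Finset.Ico i j, δ :=
          dist_le_Ico_sum_of_dist_le hij fun _ hk => hstep _ (by omega)
      _ = (j - i) * δ := by simp [Nat.cast_sub hij]
  have := dist_triangle4 (p 0) (p i) (p j) (p N)
  have := upper (Nat.zero_le i) (hij.trans hj)
  have := upper hj le_rfl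
  refine le_antisymm (upper hij hj) ?_
  push_cast at *
  nlinarith

theorem abs_natFloor_div_mul_sub_le {K : Type*} [Field K] [LinearOrder K] [IsStrictOrderedRing K]
    [FloorSemiring K] {s δ : K} (hs : 0 ≤ s) (hδ : 0 < δ) : |⌊s / δ⌋₊ * δ - s| ≤ δ := by
  have h₁ : (⌊s / δ⌋₊ : K) * δ ≤ s := (le_div_iff₀ hδ).mp (Nat.floor_le (by positivity))
  have h₂ : s < (⌊s / δ⌋₊ + 1) * δ := (div_lt_iff₀ hδ).mp (Nat.lt_floor_add_one _)
  rw [abs_le]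
  constructor <;> linarith

section Midpoints

variable {X : Type*} [PseudoMetricSpace X]

def pathLengths (x y : X) : Set ℝ≥0∞ :=
  {L | ∃ (a b : ℝ) (γ : ℝ → X), a ≤ b ∧ ContinuousOn γ (Icc a b) ∧ γ a = x ∧ γ b = y ∧
    eVariationOn γ (Icc a b) = L}

theorem exists_dist_le_half_add {x y : X}
    (hxy : sInf (pathLengths x y) ≤ ENNReal.ofReal (dist x y)) {ε : ℝ} (hε : 0 < ε) :
    ∃ m, dist x m ≤ dist x y / 2 + ε ∧ dist m y ≤ dist x y / 2 + ε := by
  have hlt : sInf (pathLengths x y) < ENNReal.ofReal (dist x y + 2 * ε) :=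
    hxy.trans_lt ((ENNReal.ofReal_lt_ofReal_iff (by positivity)).mpr (by linarith))
  obtain ⟨_, ⟨a, b, γ, hab, hγ, rfl, rfl, rfl⟩, hshort⟩ := sInf_lt_iff.mp hlt
  obtain ⟨t, ht, hmid⟩ := hγ.exists_dist_eq_dist hab
  have hsum : dist (γ a) (γ t) + dist (γ t) (γ b) < dist (γ a) (γ b) + 2 * ε := by
    have := (edist_add_edist_le_eVariationOn γ ht).trans_lt hshort
    rwa [edist_dist, edist_dist, ← ENNReal.ofReal_add dist_nonneg dist_nonneg,
      ENNReal.ofReal_lt_ofReal_iff (by positivity)] at this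
  exact ⟨γ t, by linarith, by linarith⟩

theorem exists_dist_le_half_of_forall_pos [CompactSpace X] {x y : X}
    (h : ∀ ε > 0, ∃ m, dist x m ≤ dist x y / 2 + ε ∧ dist m y ≤ dist x y / 2 + ε) :
    ∃ m, dist x m ≤ dist x y / 2 ∧ dist m y ≤ dist x y / 2 := by
  obtain ⟨m, -, hmin⟩ := isCompact_univ.exists_isMinOn ⟨x, mem_univ x⟩
    (f := fun m => max (dist x m) (dist m y)) (by fun_prop)
  have hle : max (dist x m) (dist m y) ≤ dist x y / 2 := by
    refine le_of_forall_pos_le_add fun ε hε => ?_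
    obtain ⟨m', h₁, h₂⟩ := h ε hε
    exact (hmin (mem_univ m')).trans (max_le h₁ h₂)
  exact ⟨m, (le_max_left _ _).trans hle, (le_max_right _ _).trans hle⟩

end Midpoints

section MidpointChain

variable {X : Type*} (mid : X → X → X)

def midpointChain : ℕ → X → X → ℕ → X
  | 0, x, y, k => if k = 0 then x else y
  | n + 1, x, y, k =>
    if k ≤ 2 ^ n then midpointChain n x (mid x y) k else midpointChain n (mid x y) y (k - 2 ^ n)

theorem midpointChain_apply_zero (n : ℕ) (x y : X) : midpointChain mid n x y 0 = x := by
  induction n generalizing x y with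
  | zero => simp [midpointChain]
  | succ n ih => simp [midpointChain, ih]

theorem midpointChain_apply_two_pow (n : ℕ) (x y : X) : midpointChain mid n x y (2 ^ n) = y := by
  induction n generalizing x y with
  | zero => simp [midpointChain]
  | succ n ih => simp [midpointChain, pow_succ, show 2 ^ n * 2 - 2 ^ n = 2 ^ n by omega, ih]

theorem midpointChain_succ_of_two_pow_le {n k : ℕ} (hk : 2 ^ n ≤ k) (x y : X) :
    midpointChain mid (n + 1) x y k = midpointChain mid n (mid x y) y (k - 2 ^ n) := by
  rcases hk.eq_or_lt with rfl | hlt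
  · simp [midpointChain, midpointChain_apply_zero, midpointChain_apply_two_pow]
  · simp [midpointChain, hlt.not_ge]

theorem dist_midpointChain_succ_le [PseudoMetricSpace X]
    (hmid : ∀ x y, dist x (mid x y) ≤ dist x y / 2 ∧ dist (mid x y) y ≤ dist x y / 2)
    (n : ℕ) (x y : X) {k : ℕ} (hk : k < 2 ^ n) :
    dist (midpointChain mid n x y k) (midpointChain mid n x y (k + 1)) ≤ dist x y / 2 ^ n := by
  induction n generalizing x y k with
  | zero => simp_all [midpointChain]
  | succ n ih =>
    rcases lt_or_ge k (2 ^ n) with hlt | hge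
    · simp only [midpointChain, if_pos hlt.le, if_pos (Nat.succ_le_of_lt hlt)]
      calc _ ≤ dist x (mid x y) / 2 ^ n := ih x (mid x y) hlt
        _ ≤ dist x y / 2 ^ (n + 1) := by
          rw [pow_succ', ← div_div, div_le_div_iff_of_pos_right (by positivity)]
          exact (hmid x y).1
    · rw [midpointChain_succ_of_two_pow_le mid hge, midpointChain_succ_of_two_pow_le mid (by omega),
        show k + 1 - 2 ^ n = k - 2 ^ n + 1 by omega]
      calc _ ≤ dist (mid x y) y / 2 ^ n := ih (mid x y) y (by rw [pow_succ] at hk; omega)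
        _ ≤ dist x y / 2 ^ (n + 1) := by
          rw [pow_succ', ← div_div, div_le_div_iff_of_pos_right (by positivity)]
          exact (hmid x y).2

end MidpointChain

section ApproxGeodesic

variable {X : Type*} [MetricSpace X]

def approxGeodesics (x y : X) (ε : ℝ) : Set (ℝ → X) :=
  {γ | γ 0 = x ∧ γ (dist x y) = y ∧ ∀ s ∈ Icc 0 (dist x y), ∀ t ∈ Icc 0 (dist x y),
    abs (dist (γ s) (γ t) - |s - t|) ≤ ε}

theorem approxGeodesics_mono {x y : X} {ε ε' : ℝ} (h : ε ≤ ε') :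
    approxGeodesics x y ε ⊆ approxGeodesics x y ε' :=
  fun _ ⟨h0, h1, hγ⟩ => ⟨h0, h1, fun s hs t ht => (hγ s hs t ht).trans h⟩

theorem isClosed_approxGeodesics (x y : X) (ε : ℝ) : IsClosed (approxGeodesics x y ε) := by
  simp only [approxGeodesics, ofPred_and, ofPred_forall]
  refine (isClosed_eq (continuous_apply 0) continuous_const).inter
    ((isClosed_eq (continuous_apply _) continuous_const).inter ?_)
  exact isClosed_iInter fun s => isClosed_iInter fun _ => isClosed_iInter fun t =>
    isClosed_iInter fun _ => isClosed_le
      (((continuous_apply s).dist (continuous_apply t)).sub continuous_const).abs continuous_const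

theorem approxGeodesics_zero_nonempty [CompactSpace X] {x y : X}
    (h : ∀ ε > 0, (approxGeodesics x y ε).Nonempty) : (approxGeodesics x y 0).Nonempty := by
  obtain ⟨γ, hγ⟩ := IsCompact.nonempty_iInter_of_sequence_nonempty_isCompact_isClosed
    (fun n : ℕ => approxGeodesics x y (1 / (n + 1)))
    (fun n => approxGeodesics_mono (Nat.one_div_le_one_div n.le_succ))
    (fun n => h _ Nat.one_div_pos_of_nat) (isClosed_approxGeodesics x y _).isCompact
    (fun n => isClosed_approxGeodesics x y _)
  obtain ⟨h0, h1, -⟩ := mem_iInter.mp hγ 0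
  exact ⟨γ, h0, h1, fun s hs t ht => ge_of_tendsto' tendsto_one_div_add_atTop_nhds_zero_nat
    fun n => (mem_iInter.mp hγ n).2.2 s hs t ht⟩

theorem approxGeodesics_nonempty_of_dist_succ_le {x y : X} (hxy : x ≠ y) {N : ℕ} {p : ℕ → X}
    (h0 : p 0 = x) (hN : p N = y) (hstep : ∀ k < N, dist (p k) (p (k + 1)) ≤ dist x y / N) :
    (approxGeodesics x y (2 * (dist x y / N))).Nonempty := by
  set D := dist x y
  have hN0 : N ≠ 0 := by rintro rfl; exact hxy (h0.symm.trans hN)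
  have hD : 0 < D := dist_pos.mpr hxy
  have hδ : 0 < D / N := by positivity
  have hdist : ∀ i j, i ≤ N → j ≤ N → dist (p i) (p j) = |(i : ℝ) - j| * (D / N) := by
    have hend : N * (D / N) ≤ dist (p 0) (p N) := by
      rw [h0, hN, mul_div_cancel₀ _ (Nat.cast_ne_zero.mpr hN0)]
    intro i j hi hj
    rcases le_total i j with hij | hji
    · rw [dist_eq_mul_of_dist_succ_le hstep hend hij hj, abs_sub_comm,
        abs_of_nonneg (by simpa using hij)]
    · rw [dist_comm, dist_eq_mul_of_dist_succ_le hstep hend hji hi,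
        abs_of_nonneg (by simpa using hji)]
  have hfloor : ∀ s ∈ Icc 0 D, ⌊s / (D / N)⌋₊ ≤ N := fun s hs =>
    Nat.floor_le_of_le ((div_le_iff₀ hδ).mpr (by
      rw [mul_div_cancel₀ _ (Nat.cast_ne_zero.mpr hN0)]; exact hs.2))
  refine ⟨fun t => p ⌊t / (D / N)⌋₊, by simpa using h0, ?_, fun s hs t ht => ?_⟩
  · show p ⌊D / (D / N)⌋₊ = y
    rwa [div_div_cancel₀ hD.ne', Nat.floor_natCast]
  · have hs' := abs_natFloor_div_mul_sub_le hs.1 hδ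
    have ht' := abs_natFloor_div_mul_sub_le ht.1 hδ
    simp only
    rw [hdist _ _ (hfloor s hs) (hfloor t ht), ← abs_of_pos hδ, ← abs_mul, abs_of_pos hδ, sub_mul]
    set a := (⌊s / (D / N)⌋₊ : ℝ) * (D / N)
    set b := (⌊t / (D / N)⌋₊ : ℝ) * (D / N)
    calc abs (|a - b| - |s - t|) ≤ |(a - b) - (s - t)| := abs_abs_sub_abs_le_abs_sub _ _
      _ = |(a - s) - (b - t)| := by ring_nf
      _ ≤ |a - s| + |b - t| := abs_sub _ _
      _ ≤ 2 * (D / N) := by linarith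

theorem approxGeodesics_nonempty_of_midpoints (mid : X → X → X)
    (hmid : ∀ x y, dist x (mid x y) ≤ dist x y / 2 ∧ dist (mid x y) y ≤ dist x y / 2)
    (x y : X) {ε : ℝ} (hε : 0 < ε) : (approxGeodesics x y ε).Nonempty := by
  rcases eq_or_ne x y with rfl | hxy
  · refine ⟨fun _ => x, rfl, rfl, fun s hs t ht => ?_⟩
    simp_all [hε.le]
  obtain ⟨n, hn⟩ := pow_unbounded_of_one_lt (2 * dist x y / ε) one_lt_two
  have hfine : 2 * (dist x y / (2 ^ n : ℕ)) ≤ ε := by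
    rw [div_lt_iff₀ hε] at hn
    rw [Nat.cast_pow, Nat.cast_ofNat, mul_div_assoc', div_le_iff₀ (by positivity)]
    linarith
  refine .mono (approxGeodesics_mono hfine) (approxGeodesics_nonempty_of_dist_succ_le hxy
    (midpointChain_apply_zero mid n x y) (midpointChain_apply_two_pow mid n x y) fun k hk => ?_)
  simpa using dist_midpointChain_succ_le mid hmid n x y hk

end ApproxGeodesic

/-- a compact metric space which is a length space (the distance
between any two points is the infimum of lengths of continuous paths joining
them) is geodesic. -/
theorem stmt18 {X : Type*} [MetricSpace X] [CompactSpace X]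
    (hlen : ∀ x y : X, ENNReal.ofReal (dist x y) =
      sInf {L : ENNReal | ∃ (a b : ℝ) (γ : ℝ → X), a ≤ b ∧
        ContinuousOn γ (Icc a b) ∧ γ a = x ∧ γ b = y ∧
        eVariationOn γ (Icc a b) = L}) :
    ∀ x y : X, ∃ γ : ℝ → X, γ 0 = x ∧ γ (dist x y) = y ∧
      ∀ s ∈ Icc (0:ℝ) (dist x y), ∀ t ∈ Icc (0:ℝ) (dist x y),
        dist (γ s) (γ t) = |s - t| := by
  have hmid (x y : X) : ∃ m, dist x m ≤ dist x y / 2 ∧ dist m y ≤ dist x y / 2 :=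
    exists_dist_le_half_of_forall_pos fun _ hε => exists_dist_le_half_add (hlen x y).ge hε
  choose mid hmid using hmid
  intro x y
  obtain ⟨γ, hγ0, hγ1, hγ⟩ := approxGeodesics_zero_nonempty fun _ hε =>
    approxGeodesics_nonempty_of_midpoints mid hmid x y hε
  exact ⟨γ, hγ0, hγ1, fun s hs t ht => sub_eq_zero.mp (abs_nonpos_iff.mp (hγ s hs t ht))⟩
end
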